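/- Let A be a C*-algebra and let B be a closed *-subalgebra of A that contains an approximate unit for A, meaning there is a net (e_i)_{i∈I} of elements of B with 0 ≤ e_i and ‖e_i‖ ≤ 1 such that ‖e_i a − a‖ → 0 for every a ∈ A. Then the inclusion of B into A extends to an injective *-homomorphism from the multiplier algebra M(B) into the multiplier algebra M(A) (i.e. a map whose composition with the canonical embedding B → M(B) agrees with the composition of the inclusion B ⊆ A with the canonical embedding A → M(A)), and this map induces an injective *-homomorphism of the corona algebra M(B)/B into the corona algebra M(A)/A. -/

import Mathlib

open MultiplierAlgebra Filter Topology
open scoped CStarAlgebra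

/-!
A multiplier `m = (L, R)` of `B` acts on `A` through `L' a = lim j (L eᵢ) * a` and
`R' a = lim a * j (R eᵢ)`: these nets of operators are uniformly bounded and converge on the dense
sets `j B * A` and `A * j B` (there `L' (j c * a) = j (L c) * a`), hence converge everywhere.
A multiplier of `A` is determined by its values on `j B * A`, so every identity making
`m ↦ (L', R')` a unital *-homomorphism extending `j` reduces to the same identity in `M(B)`.
Injectivity and the corona statement come from cancellation in C*-algebras (`x * y = x' * y` for
all `y` forces `x = x'`): if `m` is sent to `a ∈ A`, then `j (L c) = a * j c` for all `c`, so
`a = lim a * j eᵢ` lies in the closed range of `j`.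
-/

namespace ContinuousLinearMap

variable {ι 𝕜 E F : Type*} [NontriviallyNormedField 𝕜] [SeminormedAddCommGroup E]
  [NormedSpace 𝕜 E] [NormedAddCommGroup F] [NormedSpace 𝕜 F] {l : Filter ι}
  {T : ι → E →L[𝕜] F} {C : ℝ}

theorem cauchy_map_apply_of_dense [l.NeBot] (hT : ∀ᶠ i in l, ‖T i‖ ≤ C) {s : Set E}
    (hs : Dense s) (hTs : ∀ y ∈ s, Cauchy (l.map fun i ↦ T i y)) (x : E) :
    Cauchy (l.map fun i ↦ T i x) := by
  rw [cauchy_map_iff, Metric.uniformity_basis_dist.tendsto_right_iff]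
  refine ⟨‹_›, fun ε hε ↦ ?_⟩
  have hnear : ∀ᶠ y in 𝓝 x, C * ‖y - x‖ < ε / 3 := by
    have : Tendsto (fun y ↦ C * ‖y - x‖) (𝓝 x) (𝓝 0) := by
      simpa using (by fun_prop : Continuous fun y : E ↦ C * ‖y - x‖).tendsto x
    exact this.eventually (gt_mem_nhds (by positivity))
  obtain ⟨y, hys, hy⟩ := ((mem_closure_iff_frequently.1 (hs x)).and_eventually hnear).exists
  have hcauchy := ((cauchy_map_iff.1 (hTs y hys)).2).eventually
    (Metric.dist_mem_uniformity (div_pos hε three_pos))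
  have hbound : ∀ᶠ p : ι × ι in l ×ˢ l, ‖T p.1‖ ≤ C ∧ ‖T p.2‖ ≤ C := hT.prod_mk hT
  filter_upwards [hcauchy, hbound] with p hp ⟨h₁, h₂⟩
  have hclose : ∀ i, ‖T i‖ ≤ C → dist (T i x) (T i y) ≤ C * ‖y - x‖ := fun i hi ↦ by
    rw [dist_eq_norm, ← map_sub, norm_sub_rev]
    exact (T i).le_of_opNorm_le hi _
  calc dist (T p.1 x) (T p.2 x)
      ≤ dist (T p.1 x) (T p.1 y) + dist (T p.1 y) (T p.2 y) + dist (T p.2 y) (T p.2 x) :=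
        dist_triangle4 _ _ _ _
    _ < ε / 3 + ε / 3 + ε / 3 := by
        refine add_lt_add (add_lt_add ((hclose _ h₁).trans_lt hy) hp) ?_
        exact dist_comm (T p.2 x) _ ▸ (hclose _ h₂).trans_lt hy
    _ = ε := by ring

theorem exists_tendsto_apply_of_dense [CompleteSpace F] [l.NeBot] (hT : ∀ᶠ i in l, ‖T i‖ ≤ C)
    {s : Set E} (hs : Dense s) (hTs : ∀ y ∈ s, ∃ z, Tendsto (fun i ↦ T i y) l (𝓝 z)) :
    ∃ T' : E →L[𝕜] F, ∀ x, Tendsto (fun i ↦ T i x) l (𝓝 (T' x)) := by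
  have hlim x : ∃ z, Tendsto (fun i ↦ T i x) l (𝓝 z) :=
    cauchy_map_iff_exists_tendsto.1 <| cauchy_map_apply_of_dense hT hs
      (fun y hy ↦ (hTs y hy).elim fun _ hz ↦ hz.cauchy_map) x
  choose g hg using hlim
  let G : E →ₗ[𝕜] F := linearMapOfTendsto g (fun i ↦ (T i : E →ₗ[𝕜] F)) (tendsto_pi_nhds.2 hg)
  refine ⟨G.mkContinuous C fun x ↦ ?_, hg⟩
  exact le_of_tendsto (hg x).norm (hT.mono fun i hi ↦ (T i).le_of_opNorm_le hi x)

end ContinuousLinearMap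

theorem CStarRing.eq_of_forall_mul_right_eq {A : Type*} [NonUnitalNormedRing A] [StarRing A]
    [CStarRing A] {x x' : A} (h : ∀ y, x * y = x' * y) : x = x' :=
  sub_eq_zero.1 <| (mul_star_self_eq_zero_iff _).1 <| by rw [sub_mul, h, sub_self]

theorem CStarRing.eq_of_forall_mul_left_eq {A : Type*} [NonUnitalNormedRing A] [StarRing A]
    [CStarRing A] {x x' : A} (h : ∀ y, y * x = y * x') : x = x' :=
  sub_eq_zero.1 <| (star_mul_self_eq_zero_iff _).1 <| by rw [mul_sub, h, sub_self]

theorem NonUnitalStarAlgHom.norm_apply_le_opNorm {A B : Type*} [NonUnitalCStarAlgebra A]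
    [NonUnitalCStarAlgebra B] (j : B →⋆ₙₐ[ℂ] A) (f : B →L[ℂ] B) {b : B} (hb : ‖b‖ ≤ 1) :
    ‖j (f b)‖ ≤ ‖f‖ :=
  calc ‖j (f b)‖ ≤ ‖f b‖ := NonUnitalStarAlgHom.norm_apply_le j _
    _ ≤ ‖f‖ * ‖b‖ := f.le_opNorm b
    _ ≤ ‖f‖ := mul_le_of_le_one_right (norm_nonneg _) hb

namespace DoubleCentralizer

variable {𝕜 A : Type*} [NontriviallyNormedField 𝕜] [NonUnitalNormedRing A] [StarRing A]
  [CStarRing A] [NormedSpace 𝕜 A] [SMulCommClass 𝕜 A A] [IsScalarTower 𝕜 A A]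

theorem fst_injective : Function.Injective fun M : 𝓜(𝕜, A) ↦ M.fst := by
  intro M N h
  refine DoubleCentralizer.ext _ _ _ _ <| Prod.ext h <| ContinuousLinearMap.ext fun x ↦ ?_
  refine CStarRing.eq_of_forall_mul_right_eq fun y ↦ ?_
  rw [M.central, N.central]
  exact congrArg (x * ·) (DFunLike.congr_fun h y)

theorem fst_apply_mul (M : 𝓜(𝕜, A)) (x y : A) : M.fst (x * y) = M.fst x * y :=
  CStarRing.eq_of_forall_mul_left_eq fun z ↦ by rw [← M.central, ← mul_assoc, M.central, mul_assoc]

theorem snd_apply_mul (M : 𝓜(𝕜, A)) (x y : A) : M.snd (x * y) = x * M.snd y :=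
  CStarRing.eq_of_forall_mul_right_eq fun z ↦ by rw [M.central, mul_assoc, ← M.central, mul_assoc]

end DoubleCentralizer

namespace Filter.IsApproximateUnit

variable {α β : Type*} [TopologicalSpace α] [Mul α] {l : Filter β}

theorem of_map [TopologicalSpace β] [Mul β] {F : Type*} [FunLike F β α] [MulHomClass F β α]
    {f : F} (hf : IsInducing f) (hl : (l.map f).IsApproximateUnit) : l.IsApproximateUnit where
  tendsto_mul_left m := hf.tendsto_nhds_iff.2 <| by
    simpa [Function.comp_def] using (hl.tendsto_mul_left (f m)).comp tendsto_map
  tendsto_mul_right m := hf.tendsto_nhds_iff.2 <| by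
    simpa [Function.comp_def] using (hl.tendsto_mul_right (f m)).comp tendsto_map
  neBot := hl.neBot.of_map

theorem dense_range_map_mul {f : β → α} (hl : (l.map f).IsApproximateUnit) :
    Dense (Set.range fun p : β × α ↦ f p.1 * p.2) := fun a ↦
  have := hl.neBot
  mem_closure_of_tendsto (hl.tendsto_mul_right a) <|
    eventually_map.2 <| .of_forall fun b ↦ ⟨(b, a), rfl⟩

theorem dense_range_mul_map {f : β → α} (hl : (l.map f).IsApproximateUnit) :
    Dense (Set.range fun p : α × β ↦ p.1 * f p.2) := fun a ↦
  have := hl.neBot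
  mem_closure_of_tendsto (hl.tendsto_mul_left a) <|
    eventually_map.2 <| .of_forall fun b ↦ ⟨(a, b), rfl⟩

end Filter.IsApproximateUnit

namespace DoubleCentralizer

variable {A B : Type*} [NonUnitalCStarAlgebra A] [NonUnitalCStarAlgebra B] {j : B →⋆ₙₐ[ℂ] A}
  {l : Filter B}

theorem exists_fst_extension (hB : l.IsApproximateUnit) (hA : (l.map j).IsApproximateUnit)
    (hl1 : ∀ᶠ b in l, ‖b‖ ≤ 1) (m : 𝓜(ℂ, B)) :
    ∃ L : A →L[ℂ] A, ∀ c a, L (j c * a) = j (m.fst c) * a := by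
  have := hB.neBot
  have hlim c a : Tendsto (fun b ↦ j (m.fst b) * (j c * a)) l (𝓝 (j (m.fst c) * a)) := by
    have := (((map_continuous j).tendsto _).comp <| (m.fst.continuous.tendsto _).comp <|
      hB.tendsto_mul_right c).mul_const a
    simpa [fst_apply_mul, mul_assoc] using this
  obtain ⟨L, hL⟩ := ContinuousLinearMap.exists_tendsto_apply_of_dense
    (T := fun b ↦ ContinuousLinearMap.mul ℂ A (j (m.fst b))) (C := ‖m.fst‖)
    (hl1.mono fun b hb ↦ (ContinuousLinearMap.opNorm_mul_apply_le _ _ _).trans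
      (j.norm_apply_le_opNorm _ hb))
    hA.dense_range_map_mul (by rintro _ ⟨⟨c, a⟩, rfl⟩; exact ⟨_, hlim c a⟩)
  exact ⟨L, fun c a ↦ tendsto_nhds_unique (hL _) (hlim c a)⟩

theorem exists_snd_extension (hB : l.IsApproximateUnit) (hA : (l.map j).IsApproximateUnit)
    (hl1 : ∀ᶠ b in l, ‖b‖ ≤ 1) (m : 𝓜(ℂ, B)) :
    ∃ R : A →L[ℂ] A, ∀ a c, R (a * j c) = a * j (m.snd c) := by
  have := hB.neBot
  have hlim a c : Tendsto (fun b ↦ a * j c * j (m.snd b)) l (𝓝 (a * j (m.snd c))) := by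
    have := (((map_continuous j).tendsto _).comp <| (m.snd.continuous.tendsto _).comp <|
      hB.tendsto_mul_left c).const_mul a
    simpa [snd_apply_mul, mul_assoc] using this
  obtain ⟨R, hR⟩ := ContinuousLinearMap.exists_tendsto_apply_of_dense
    (T := fun b ↦ (ContinuousLinearMap.mul ℂ A).flip (j (m.snd b))) (C := ‖m.snd‖)
    (hl1.mono fun b hb ↦ (ContinuousLinearMap.opNorm_mul_flip_apply _ _).trans_le
      (j.norm_apply_le_opNorm _ hb))
    hA.dense_range_mul_map (by rintro _ ⟨⟨a, c⟩, rfl⟩; exact ⟨_, hlim a c⟩)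
  exact ⟨R, fun a c ↦ tendsto_nhds_unique (hR _) (hlim a c)⟩

theorem exists_extension (hB : l.IsApproximateUnit) (hA : (l.map j).IsApproximateUnit)
    (hl1 : ∀ᶠ b in l, ‖b‖ ≤ 1) (m : 𝓜(ℂ, B)) :
    ∃ M : 𝓜(ℂ, A), (∀ c a, M.fst (j c * a) = j (m.fst c) * a) ∧
      ∀ a c, M.snd (a * j c) = a * j (m.snd c) := by
  obtain ⟨L, hL⟩ := exists_fst_extension hB hA hl1 m
  obtain ⟨R, hR⟩ := exists_snd_extension hB hA hl1 m
  have hcentral : (fun p : A × A ↦ R p.1 * p.2) = fun p ↦ p.1 * L p.2 := by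
    refine Continuous.ext_on (hA.dense_range_mul_map.prod hA.dense_range_map_mul)
      (by fun_prop) (by fun_prop) ?_
    rintro ⟨_, _⟩ ⟨⟨⟨a, c⟩, rfl⟩, ⟨⟨c', a'⟩, rfl⟩⟩
    have := congrArg j (m.central c c')
    simp only [map_mul] at this
    simp only [hR, hL, mul_assoc]
    rw [← mul_assoc (j _), this, mul_assoc]
  exact ⟨⟨(L, R), fun x y ↦ congrFun hcentral (x, y)⟩, hL, hR⟩

theorem ext_of_fst_map_mul (hA : (l.map j).IsApproximateUnit) {M N : 𝓜(ℂ, A)}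
    (h : ∀ c a, M.fst (j c * a) = N.fst (j c * a)) : M = N :=
  fst_injective <| DFunLike.coe_injective <|
    Continuous.ext_on hA.dense_range_map_mul M.fst.continuous N.fst.continuous <| by
      rintro _ ⟨⟨c, a⟩, rfl⟩
      exact h c a

variable (hB : l.IsApproximateUnit) (hA : (l.map j).IsApproximateUnit) (hl1 : ∀ᶠ b in l, ‖b‖ ≤ 1)

noncomputable def extend (m : 𝓜(ℂ, B)) : 𝓜(ℂ, A) :=
  (exists_extension hB hA hl1 m).choose

theorem extend_fst_map_mul (m : 𝓜(ℂ, B)) (c : B) (a : A) :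
    (extend hB hA hl1 m).fst (j c * a) = j (m.fst c) * a :=
  (exists_extension hB hA hl1 m).choose_spec.1 c a

theorem extend_snd_mul_map (m : 𝓜(ℂ, B)) (a : A) (c : B) :
    (extend hB hA hl1 m).snd (a * j c) = a * j (m.snd c) :=
  (exists_extension hB hA hl1 m).choose_spec.2 a c

theorem eq_extend {m : 𝓜(ℂ, B)} {M : 𝓜(ℂ, A)} (h : ∀ c a, M.fst (j c * a) = j (m.fst c) * a) :
    M = extend hB hA hl1 m :=
  ext_of_fst_map_mul hA fun c a ↦ by rw [h, extend_fst_map_mul]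

noncomputable def extendStarAlgHom : 𝓜(ℂ, B) →⋆ₐ[ℂ] 𝓜(ℂ, A) where
  toFun := extend hB hA hl1
  map_one' := (eq_extend hB hA hl1 fun c a ↦ by simp).symm
  map_mul' m m' := (eq_extend hB hA hl1 fun c a ↦ by simp [extend_fst_map_mul]).symm
  map_zero' := (eq_extend hB hA hl1 fun c a ↦ by simp).symm
  map_add' m m' := (eq_extend hB hA hl1 fun c a ↦ by simp [extend_fst_map_mul, add_mul]).symm
  commutes' k := (eq_extend hB hA hl1 fun c a ↦ by simp [smul_mul_assoc]).symm
  map_star' m := (eq_extend hB hA hl1 fun c a ↦ by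
    simp [star_fst, star_mul, ← map_star, extend_snd_mul_map]).symm

theorem extendStarAlgHom_coe (b : B) : extendStarAlgHom hB hA hl1 b = (j b : 𝓜(ℂ, A)) :=
  (eq_extend hB hA hl1 fun c a ↦ by simp [mul_assoc]).symm

theorem extendStarAlgHom_injective (hj : Function.Injective j) :
    Function.Injective (extendStarAlgHom hB hA hl1) := by
  intro m m' h
  change extend hB hA hl1 m = extend hB hA hl1 m' at h
  refine fst_injective <| ContinuousLinearMap.ext fun c ↦ hj <|
    CStarRing.eq_of_forall_mul_right_eq fun a ↦ ?_
  rw [← extend_fst_map_mul hB hA hl1, ← extend_fst_map_mul hB hA hl1, h]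

theorem exists_eq_coe_of_extendStarAlgHom_eq_coe (hj : Function.Injective j)
    (hrange : IsClosed (Set.range j)) {m : 𝓜(ℂ, B)} {a : A}
    (h : extendStarAlgHom hB hA hl1 m = a) : ∃ b : B, m = b := by
  change extend hB hA hl1 m = a at h
  have hfst c : j (m.fst c) = a * j c := CStarRing.eq_of_forall_mul_right_eq fun y ↦ by
    rw [← extend_fst_map_mul hB hA hl1, h, coe_fst, ContinuousLinearMap.mul_apply', mul_assoc]
  obtain ⟨b, rfl⟩ : a ∈ Set.range j := by
    have := hA.neBot
    rw [← hrange.closure_eq]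
    exact mem_closure_of_tendsto (hA.tendsto_mul_left a) <|
      eventually_map.2 <| .of_forall fun c ↦ ⟨m.fst c, hfst c⟩
  exact ⟨b, fst_injective <| ContinuousLinearMap.ext fun c ↦ hj <| by simp [hfst]⟩

end DoubleCentralizer

/-- The last conjunct is the injectivity of the induced map `M(B)/B → M(A)/A`. -/
theorem multiplier_algebra_embedding_of_approx_unit
    (A : Type u) [NonUnitalCStarAlgebra A]
    (B : Type u) [NonUnitalCStarAlgebra B] [PartialOrder B] [StarOrderedRing B]
    (j : B →⋆ₙₐ[ℂ] A) (hj : Function.Injective j) (hrange : IsClosed (Set.range j))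
    (I : Type) [Nonempty I] [Preorder I] [IsDirected I (· ≤ ·)]
    (e : I → B) (hpos : ∀ i, 0 ≤ e i) (hnorm : ∀ i, ‖e i‖ ≤ 1)
    (happrox : ∀ a : A, Tendsto (fun i => ‖j (e i) * a - a‖) atTop (nhds 0)) :
    ∃ Φ : 𝓜(ℂ, B) →⋆ₐ[ℂ] 𝓜(ℂ, A),
      Function.Injective Φ ∧
      (∀ b : B, Φ (b : 𝓜(ℂ, B)) = ((j b : A) : 𝓜(ℂ, A))) ∧
      (∀ m : 𝓜(ℂ, B), (∃ a : A, Φ m = (a : 𝓜(ℂ, A))) → ∃ b : B, m = (b : 𝓜(ℂ, B))) := by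
  have hright a : Tendsto (· * a) ((atTop.map e).map j) (𝓝 a) := by
    rw [map_map, tendsto_map'_iff]
    exact tendsto_iff_norm_sub_tendsto_zero.2 (happrox a)
  have hsa : ∀ᶠ x in (atTop.map e).map j, IsSelfAdjoint x :=
    eventually_map.2 <| eventually_map.2 <| .of_forall fun i ↦
      (IsSelfAdjoint.of_nonneg (hpos i)).map j
  have hA : ((atTop.map e).map j).IsApproximateUnit :=
    { tendsto_mul_left := (CStarAlgebra.tendsto_mul_left_iff_tendsto_mul_right hsa).2 hright
      tendsto_mul_right := hright }
  have hB := hA.of_map (NonUnitalStarAlgHom.isometry j hj).isEmbedding.isInducing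
  have hl1 : ∀ᶠ b in atTop.map e, ‖b‖ ≤ 1 := eventually_map.2 <| .of_forall hnorm
  exact ⟨DoubleCentralizer.extendStarAlgHom hB hA hl1,
    DoubleCentralizer.extendStarAlgHom_injective hB hA hl1 hj,
    DoubleCentralizer.extendStarAlgHom_coe hB hA hl1,
    fun _ ⟨_, h⟩ ↦ DoubleCentralizer.exists_eq_coe_of_extendStarAlgHom_eq_coe hB hA hl1 hj hrange h⟩
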